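/- Let f : P(X) × Y → ℝ be defined by f(Q, y) = max_{λ ∈ Λ} E_Q[l(y, λ, x)] with l continuous and Y, Λ, X compact. If y_i → y* in Y and Q_i → Q∞ weakly in P(X), then f(Q_i, y_i) → f(Q∞, y*). In particular, for a stationary ergodic process with conditional distributions P_i = P(X_0 ∈ · | X_{1−i}^{−1}) → P∞ weakly (by Lévy's zero-one law) and expert outputs y^i → y*, the Cesàro averages (1/N) Σ_{i=1}^N f(P_i, y^i) converge almost surely to E[f(P∞, y*)]. -/

import Mathlib

/-!
Joint continuity: since `X` is compact, `(y, λ) ↦ l(y, λ, ·)` is continuous into `X →ᵇ ℝ`;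
`(g, Q) ↦ ∫ g dQ` is continuous in `Q` (weak convergence) and 1-Lipschitz in `g`, hence jointly
continuous; and a supremum over the compact `Λ` of a jointly continuous function is continuous.

The Cesàro statement is Breiman's generalized ergodic theorem for `Fᵢ = f(Pᵢ, yⁱ) → f(P∞, y*)`,
deduced from Birkhoff's pointwise ergodic theorem, which in turn comes from the maximal ergodic
theorem.
-/

open MeasureTheory Filter Topology Finset
open scoped BoundedContinuousFunction

lemma abs_integral_le_of_abs_le {X : Type*} [MeasurableSpace X] {μ : Measure X}
    [IsProbabilityMeasure μ] {g : X → ℝ} {C : ℝ} (hg : ∀ x, |g x| ≤ C) : |∫ x, g x ∂μ| ≤ C := by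
  simpa using norm_integral_le_of_norm_le_const (μ := μ) (f := g) (ae_of_all _ hg)

section WeakConvergence

variable {X : Type*} [TopologicalSpace X] [MeasurableSpace X] [OpensMeasurableSpace X]

theorem continuous_integral_boundedContinuousFunction_prod :
    Continuous fun p : (X →ᵇ ℝ) × ProbabilityMeasure X => ∫ x, p.1 x ∂(p.2 : Measure X) := by
  refine continuous_prod_of_continuous_lipschitzWith _ 1
    (fun g => ProbabilityMeasure.continuous_integral_boundedContinuousFunction g) fun Q => ?_
  refine LipschitzWith.of_dist_le_mul fun g g' => ?_
  rw [NNReal.coe_one, one_mul, dist_eq_norm, dist_eq_norm,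
    ← integral_sub (g.integrable _) (g'.integrable _)]
  exact (g - g').norm_integral_le_norm (Q : Measure X)

variable [CompactSpace X] {Y Λ : Type*} [TopologicalSpace Y] [TopologicalSpace Λ] [CompactSpace Λ]

theorem continuous_iSup_integral (l : Y → Λ → X → ℝ)
    (hl : Continuous fun p : Y × Λ × X => l p.1 p.2.1 p.2.2) :
    Continuous fun p : ProbabilityMeasure X × Y =>
      ⨆ lam : Λ, ∫ x, l p.2 lam x ∂(p.1 : Measure X) := by
  let L : C(Y × Λ, C(X, ℝ)) :=
    ContinuousMap.curry ⟨fun q : (Y × Λ) × X => l q.1.1 q.1.2 q.2, by fun_prop⟩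
  have hL : Continuous fun q : (ProbabilityMeasure X × Y) × Λ =>
      ∫ x, l q.1.2 q.2 x ∂(q.1.1 : Measure X) :=
    continuous_integral_boundedContinuousFunction_prod.comp
      (((ContinuousMap.isometryEquivBoundedOfCompact X ℝ).continuous.comp
        (L.continuous.comp (continuous_snd.fst'.prodMk continuous_snd))).prodMk
        continuous_fst.fst)
  simpa only [← Set.image_univ, ← sSup_range] using
    isCompact_univ.continuous_sSup
      (f := fun (p : ProbabilityMeasure X × Y) (lam : Λ) => ∫ x, l p.2 lam x ∂(p.1 : Measure X)) hL

end WeakConvergence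

lemma abs_iSup_le_of_forall_abs_le {ι : Sort*} {a : ι → ℝ} {C : ℝ} (hC : 0 ≤ C)
    (ha : ∀ i, |a i| ≤ C) : |⨆ i, a i| ≤ C := by
  refine abs_le.2 ⟨?_, Real.iSup_le (fun i => (abs_le.1 (ha i)).2) hC⟩
  rcases isEmpty_or_nonempty ι with hι | ⟨⟨i⟩⟩
  · simpa using hC
  · exact (abs_le.1 (ha i)).1.trans
      (le_ciSup ⟨C, Set.forall_mem_range.2 fun i => (abs_le.1 (ha i)).2⟩ i)

lemma exists_abs_iSup_integral_le {X Y Λ : Type*} [TopologicalSpace X] [CompactSpace X]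
    [MeasurableSpace X] [TopologicalSpace Y] [CompactSpace Y] [TopologicalSpace Λ]
    [CompactSpace Λ] (l : Y → Λ → X → ℝ)
    (hl : Continuous fun p : Y × Λ × X => l p.1 p.2.1 p.2.2) :
    ∃ C, ∀ (y : Y) (Q : ProbabilityMeasure X),
      |⨆ lam : Λ, ∫ x, l y lam x ∂(Q : Measure X)| ≤ C := by
  obtain ⟨C, hC⟩ := isCompact_univ.exists_bound_of_continuousOn hl.continuousOn
  exact ⟨max C 0, fun y Q => abs_iSup_le_of_forall_abs_le (le_max_right _ _) fun lam =>
    abs_integral_le_of_abs_le fun x => (hC (y, lam, x) trivial).trans (le_max_left _ _)⟩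

section MaximalErgodic

variable {α : Type*} {f : α → α} {g : α → ℝ}

noncomputable def birkhoffMax (f : α → α) (g : α → ℝ) (n : ℕ) (x : α) : ℝ :=
  (range (n + 1)).sup' nonempty_range_add_one fun k => birkhoffSum f g k x

lemma birkhoffSum_le_birkhoffMax {k n : ℕ} (hk : k ≤ n) (x : α) :
    birkhoffSum f g k x ≤ birkhoffMax f g n x :=
  le_sup' (fun k => birkhoffSum f g k x) (mem_range.2 (Nat.lt_succ_of_le hk))

lemma birkhoffMax_nonneg (n : ℕ) (x : α) : 0 ≤ birkhoffMax f g n x := by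
  simpa using birkhoffSum_le_birkhoffMax (f := f) (g := g) (Nat.zero_le n) x

lemma birkhoffMax_mono (x : α) : Monotone fun n => birkhoffMax f g n x :=
  fun _ _ hmn => sup'_le _ _ fun _ hk =>
    birkhoffSum_le_birkhoffMax ((Nat.lt_succ_iff.1 (mem_range.1 hk)).trans hmn) x

lemma exists_birkhoffSum_eq_birkhoffMax (n : ℕ) (x : α) :
    ∃ k, birkhoffSum f g k x = birkhoffMax f g n x := by
  obtain ⟨k, -, hk⟩ := exists_mem_eq_sup' nonempty_range_add_one fun k => birkhoffSum f g k x
  exact ⟨k, hk.symm⟩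

lemma birkhoffMax_le_max_zero_add (n : ℕ) (x : α) :
    birkhoffMax f g n x ≤ max 0 (g x + birkhoffMax f g n (f x)) := by
  refine sup'_le _ _ fun k hk => ?_
  rcases k with _ | k
  · simp
  · rw [birkhoffSum_succ']
    exact le_max_of_le_right ((add_le_add_iff_left _).2
      (birkhoffSum_le_birkhoffMax (Nat.lt_of_succ_lt_succ (mem_range.1 hk)).le (f x)))

lemma birkhoffMax_le_birkhoffSum_abs (n : ℕ) (x : α) :
    birkhoffMax f g n x ≤ birkhoffSum f (fun x => |g x|) n x := by
  refine sup'_le _ _ fun k hk => ?_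
  calc birkhoffSum f g k x ≤ birkhoffSum f (fun x => |g x|) k x :=
        sum_le_sum fun j _ => le_abs_self _
    _ ≤ birkhoffSum f (fun x => |g x|) n x :=
        sum_le_sum_of_subset_of_nonneg (range_subset_range.2 (Nat.lt_succ_iff.1 (mem_range.1 hk)))
          fun _ _ _ => abs_nonneg _

variable [MeasurableSpace α]

lemma measurable_birkhoffSum (hf : Measurable f) (hg : Measurable g) (n : ℕ) :
    Measurable (birkhoffSum f g n) :=
  Finset.measurable_sum _ fun k _ => hg.comp (hf.iterate k)

lemma measurable_birkhoffMax (hf : Measurable f) (hg : Measurable g) (n : ℕ) :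
    Measurable (birkhoffMax f g n) :=
  measurable_range_sup'' fun k _ => measurable_birkhoffSum hf hg k

variable {μ : Measure α}

lemma integrable_birkhoffMax (hf : MeasurePreserving f μ μ) (hgm : Measurable g)
    (hg : Integrable g μ) (n : ℕ) : Integrable (birkhoffMax f g n) μ := by
  refine Integrable.mono' (g := birkhoffSum f (fun x => |g x|) n)
    (integrable_finsetSum _ fun k _ => ?_)
    (measurable_birkhoffMax hf.measurable hgm n).aestronglyMeasurable (ae_of_all _ fun x => ?_)
  · exact (hf.iterate k).integrable_comp hg.abs.aestronglyMeasurable |>.2 hg.abs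
  · rw [Real.norm_eq_abs, abs_of_nonneg (birkhoffMax_nonneg n x)]
    exact birkhoffMax_le_birkhoffSum_abs n x

/-- Garsia's proof: on `{0 < Mₙ}` one has `g ≥ Mₙ - Mₙ ∘ f`, while `Mₙ` vanishes off this set
and `∫ Mₙ ∘ f = ∫ Mₙ`. -/
theorem setIntegral_birkhoffMax_pos_nonneg (hf : MeasurePreserving f μ μ) (hgm : Measurable g)
    (hg : Integrable g μ) (n : ℕ) :
    0 ≤ ∫ x in {x | 0 < birkhoffMax f g n x}, g x ∂μ := by
  set M := birkhoffMax f g n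
  set A := {x | 0 < M x}
  have hMm : Measurable M := measurable_birkhoffMax hf.measurable hgm n
  have hA : MeasurableSet A := measurableSet_lt measurable_const hMm
  have hM : Integrable M μ := integrable_birkhoffMax hf hgm hg n
  have hMf : Integrable (fun x => M (f x)) μ := (hf.integrable_comp hMm.aestronglyMeasurable).2 hM
  have hle : ∀ x ∈ A, M x - M (f x) ≤ g x := fun x hx => by
    have := birkhoffMax_le_max_zero_add (f := f) (g := g) n x
    rw [le_max_iff] at this
    rcases this with h | h
    · exact absurd hx (not_lt.2 h)
    · linarith
  have hMA : ∫ x in A, M x ∂μ = ∫ x, M x ∂μ :=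
    setIntegral_eq_integral_of_forall_compl_eq_zero fun x hx =>
      le_antisymm (not_lt.1 hx) (birkhoffMax_nonneg n x)
  have hMfA : ∫ x in A, M (f x) ∂μ ≤ ∫ x, M (f x) ∂μ :=
    setIntegral_le_integral hMf (ae_of_all _ fun x => birkhoffMax_nonneg n (f x))
  have hMf_eq : ∫ x, M (f x) ∂μ = ∫ x, M x ∂μ := by
    rw [← integral_map hf.measurable.aemeasurable hMm.aestronglyMeasurable, hf.map_eq]
  calc 0 = ∫ x in A, M x ∂μ - ∫ x, M (f x) ∂μ := by rw [hMA, hMf_eq, sub_self]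
    _ ≤ ∫ x in A, (M x - M (f x)) ∂μ := by
        rw [integral_sub hM.integrableOn hMf.integrableOn]; linarith
    _ ≤ ∫ x in A, g x ∂μ :=
        setIntegral_mono_on (hM.sub hMf).integrableOn hg.integrableOn hA hle

theorem setIntegral_exists_birkhoffSum_pos_nonneg (hf : MeasurePreserving f μ μ)
    (hgm : Measurable g) (hg : Integrable g μ) :
    0 ≤ ∫ x in {x | ∃ n, 0 < birkhoffSum f g n x}, g x ∂μ := by
  have hunion : {x | ∃ n, 0 < birkhoffSum f g n x} = ⋃ n, {x | 0 < birkhoffMax f g n x} := by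
    ext x
    simp only [Set.mem_ofPred_eq, Set.mem_iUnion]
    constructor
    · rintro ⟨n, hn⟩
      exact ⟨n, hn.trans_le (birkhoffSum_le_birkhoffMax le_rfl x)⟩
    · rintro ⟨n, hn⟩
      obtain ⟨k, hk⟩ := exists_birkhoffSum_eq_birkhoffMax (f := f) (g := g) n x
      exact ⟨k, hk ▸ hn⟩
  rw [hunion]
  refine ge_of_tendsto' (tendsto_setIntegral_of_monotone
    (fun n => measurableSet_lt measurable_const (measurable_birkhoffMax hf.measurable hgm n))
    (fun m n hmn x hx => lt_of_lt_of_le hx (birkhoffMax_mono x hmn)) hg.integrableOn)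
    fun n => setIntegral_birkhoffMax_pos_nonneg hf hgm hg n

end MaximalErgodic

lemma limsup_le_limsup_of_tendsto_sub {ι : Type*} {l : Filter ι} [l.NeBot] {u v : ι → ℝ}
    (hv : IsBoundedUnder (· ≤ ·) l v) (hv' : IsBoundedUnder (· ≥ ·) l v)
    (h : Tendsto (fun i => u i - v i) l (𝓝 0)) : limsup u l ≤ limsup v l :=
  calc limsup u l = limsup (v + fun i => u i - v i) l := by congr 1; ext i; simp
    _ ≤ limsup v l + limsup (fun i => u i - v i) l :=
        limsup_add_le hv' hv h.isBoundedUnder_ge.isCoboundedUnder_le h.isBoundedUnder_le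
    _ = limsup v l := by rw [h.limsup_eq, add_zero]

section Birkhoff

variable {α : Type*} {f : α → α} {g : α → ℝ} {C : ℝ}

lemma abs_birkhoffAverage_le (hC : ∀ x, |g x| ≤ C) (n : ℕ) (x : α) :
    |birkhoffAverage ℝ f g n x| ≤ C := by
  have hC0 : 0 ≤ C := (abs_nonneg _).trans (hC x)
  have hS : |birkhoffSum f g n x| ≤ n * C :=
    calc |birkhoffSum f g n x| ≤ ∑ k ∈ range n, |g (f^[k] x)| := abs_sum_le_sum_abs _ _
      _ ≤ ∑ _k ∈ range n, C := sum_le_sum fun k _ => hC _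
      _ = n * C := by simp
  rw [birkhoffAverage, smul_eq_mul, abs_mul, abs_inv, Nat.abs_cast]
  rcases n.eq_zero_or_pos with rfl | hn
  · simpa using hC0
  · rw [inv_mul_le_iff₀ (by exact_mod_cast hn)]
    exact hS

lemma limsup_birkhoffAverage_apply (hC : ∀ x, |g x| ≤ C) (x : α) :
    limsup (birkhoffAverage ℝ f g · (f x)) atTop = limsup (birkhoffAverage ℝ f g · x) atTop := by
  have hbdd : ∀ y, IsBoundedUnder (· ≤ ·) atTop (birkhoffAverage ℝ f g · y) ∧
      IsBoundedUnder (· ≥ ·) atTop (birkhoffAverage ℝ f g · y) := fun y =>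
    ⟨isBoundedUnder_of ⟨C, fun n => (abs_le.1 (abs_birkhoffAverage_le hC n y)).2⟩,
      isBoundedUnder_of ⟨-C, fun n => (abs_le.1 (abs_birkhoffAverage_le hC n y)).1⟩⟩
  have hg : Bornology.IsBounded (Set.range g) :=
    isBounded_iff_forall_norm_le.2 ⟨C, Set.forall_mem_range.2 hC⟩
  have h := tendsto_birkhoffAverage_apply_sub_birkhoffAverage' ℝ hg f x
  exact le_antisymm (limsup_le_limsup_of_tendsto_sub (hbdd x).1 (hbdd x).2 h)
    (limsup_le_limsup_of_tendsto_sub (hbdd (f x)).1 (hbdd (f x)).2 (by simpa using h.neg))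

lemma birkhoffSum_sub_const (c : ℝ) (n : ℕ) (x : α) :
    birkhoffSum f (fun x => g x - c) n x = birkhoffSum f g n x - n * c := by
  simp [birkhoffSum, sum_sub_distrib]

variable [MeasurableSpace α] {μ : Measure α}

lemma measurable_birkhoffAverage (hf : Measurable f) (hg : Measurable g) (n : ℕ) :
    Measurable (birkhoffAverage ℝ f g n) :=
  (measurable_birkhoffSum hf hg n).const_smul ((n : ℝ)⁻¹)

variable [IsProbabilityMeasure μ]

/-- The set where the limsup of the Birkhoff averages exceeds `c` is invariant; if it is not null,
ergodicity makes it conull, and on it some Birkhoff sum of `g - c` is positive, contradicting the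
maximal ergodic theorem when `∫ g < c`. -/
lemma ae_limsup_birkhoffAverage_le_of_integral_lt (hf : Ergodic f μ) (hg : Measurable g)
    (hC : ∀ x, |g x| ≤ C) {c : ℝ} (hc : ∫ x, g x ∂μ < c) :
    ∀ᵐ x ∂μ, limsup (birkhoffAverage ℝ f g · x) atTop ≤ c := by
  set E := {x | c < limsup (birkhoffAverage ℝ f g · x) atTop}
  have hE : MeasurableSet E := measurableSet_lt measurable_const
    (Measurable.limsup fun n => measurable_birkhoffAverage hf.measurable hg n)
  have hfE : f ⁻¹' E = E := by
    ext x
    simp only [E, Set.mem_preimage, Set.mem_ofPred_eq, limsup_birkhoffAverage_apply hC x]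
  rcases hf.measure_self_or_compl_eq_zero hE hfE with hE0 | hEc
  · filter_upwards [measure_eq_zero_iff_ae_notMem.1 hE0] with x hx using not_lt.1 hx
  exfalso
  have hsub : E ⊆ {x | ∃ n, 0 < birkhoffSum f (fun x => g x - c) n x} := by
    intro x hx
    have hcob : IsCoboundedUnder (· ≤ ·) atTop (birkhoffAverage ℝ f g · x) :=
      (isBoundedUnder_of ⟨-C, fun n => (abs_le.1 (abs_birkhoffAverage_le hC n x)).1⟩ :
        IsBoundedUnder (· ≥ ·) atTop _).isCoboundedUnder_le
    obtain ⟨n, hcn, hn⟩ :=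
      ((frequently_lt_of_lt_limsup hcob hx).and_eventually (eventually_gt_atTop 0)).exists
    have hn' : (0 : ℝ) < n := Nat.cast_pos.2 hn
    rw [birkhoffAverage, smul_eq_mul, lt_inv_mul_iff₀ hn'] at hcn
    exact ⟨n, by rw [birkhoffSum_sub_const]; linarith⟩
  have hgi : Integrable g μ := Integrable.of_bound hg.aestronglyMeasurable C (ae_of_all _ hC)
  have hmax := setIntegral_exists_birkhoffSum_pos_nonneg (g := fun x => g x - c)
    hf.toMeasurePreserving (hg.sub measurable_const) (hgi.sub (integrable_const c))
  rw [setIntegral_congr_set (ae_eq_univ.2 (measure_mono_null (Set.compl_subset_compl.2 hsub) hEc)),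
    setIntegral_univ, integral_sub hgi (integrable_const c)] at hmax
  simp only [integral_const, probReal_univ, smul_eq_mul, one_mul] at hmax
  linarith

lemma ae_limsup_birkhoffAverage_le (hf : Ergodic f μ) (hg : Measurable g)
    (hC : ∀ x, |g x| ≤ C) :
    ∀ᵐ x ∂μ, limsup (birkhoffAverage ℝ f g · x) atTop ≤ ∫ x, g x ∂μ := by
  have h := ae_all_iff.2 fun k : ℕ => ae_limsup_birkhoffAverage_le_of_integral_lt hf hg hC
    (lt_add_of_pos_right (∫ x, g x ∂μ) (Nat.one_div_pos_of_nat (n := k)))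
  have hlim : Tendsto (fun k : ℕ => ∫ x, g x ∂μ + 1 / ((k : ℝ) + 1)) atTop
      (𝓝 (∫ x, g x ∂μ)) := by
    simpa using tendsto_one_div_add_atTop_nhds_zero_nat.const_add (∫ x, g x ∂μ)
  filter_upwards [h] with x hx
  exact ge_of_tendsto' hlim hx

theorem ae_tendsto_birkhoffAverage (hf : Ergodic f μ) (hg : Measurable g)
    (hC : ∀ x, |g x| ≤ C) :
    ∀ᵐ x ∂μ, Tendsto (birkhoffAverage ℝ f g · x) atTop (𝓝 (∫ x, g x ∂μ)) := by
  have hneg := ae_limsup_birkhoffAverage_le hf hg.neg (g := -g) (by simpa using hC)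
  filter_upwards [ae_limsup_birkhoffAverage_le hf hg hC, hneg] with x hup hlow
  simp only [birkhoffAverage_neg, Pi.neg_apply, integral_neg] at hlow
  refine tendsto_order.2 ⟨fun a ha => ?_, fun a ha => eventually_lt_of_limsup_lt (hup.trans_lt ha)
    (isBoundedUnder_of ⟨C, fun n => (abs_le.1 (abs_birkhoffAverage_le hC n x)).2⟩)⟩
  filter_upwards [eventually_lt_of_limsup_lt (hlow.trans_lt (neg_lt_neg ha))
    (isBoundedUnder_of ⟨C, fun n => neg_le.1 (abs_le.1 (abs_birkhoffAverage_le hC n x)).1⟩)]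
    with n hn using neg_lt_neg_iff.1 hn

end Birkhoff

lemma tendsto_iSup_add_of_tendsto_zero {a : ℕ → ℝ} (ha0 : ∀ i, 0 ≤ a i)
    (ha : Tendsto a atTop (𝓝 0)) : Tendsto (fun k => ⨆ i, a (k + i)) atTop (𝓝 0) := by
  refine tendsto_order.2 ⟨fun b hb => Eventually.of_forall fun k =>
    hb.trans_le (Real.iSup_nonneg fun i => ha0 _), fun b hb => ?_⟩
  obtain ⟨K, hK⟩ := eventually_atTop.1 (ha.eventually (gt_mem_nhds (half_pos hb)))
  filter_upwards [eventually_ge_atTop K] with k hk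
  exact (Real.iSup_le (fun i => (hK _ (hk.trans (Nat.le_add_right k i))).le)
    (half_pos hb).le).trans_lt (half_lt_self hb)

lemma sum_range_le_mul_add_sum {D h : ℕ → ℝ} {B : ℝ} {k : ℕ} (hB : 0 ≤ B) (hD : ∀ i, D i ≤ B)
    (hDh : ∀ i, k ≤ i → D i ≤ h i) (hh : ∀ i, 0 ≤ h i) (N : ℕ) :
    ∑ i ∈ range N, D i ≤ k * B + ∑ i ∈ range N, h i := by
  rw [← sum_filter_add_sum_filter_not (range N) (· < k)]
  gcongr
  · calc ∑ i ∈ (range N).filter (· < k), D i ≤ ∑ _i ∈ (range N).filter (· < k), B :=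
          sum_le_sum fun i _ => hD i
      _ ≤ k * B := by
          rw [sum_const, nsmul_eq_mul]
          gcongr
          exact_mod_cast (card_le_card fun i hi => mem_range.2 (mem_filter.1 hi).2).trans
            (card_range k).le
  · calc ∑ i ∈ (range N).filter (¬ · < k), D i ≤ ∑ i ∈ (range N).filter (¬ · < k), h i :=
          sum_le_sum fun i hi => hDh i (not_lt.1 (mem_filter.1 hi).2)
      _ ≤ ∑ i ∈ range N, h i :=
          sum_le_sum_of_subset_of_nonneg (filter_subset _ _) fun i _ _ => hh i

lemma tendsto_zero_of_forall_le_of_tendsto {ι κ : Type*} {l : Filter ι} {l' : Filter κ}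
    [l'.NeBot] {β : ι → ℝ} {γ : κ → ι → ℝ} {b : κ → ℝ} (hβ : ∀ i, 0 ≤ β i)
    (hle : ∀ k i, β i ≤ γ k i) (hγ : ∀ k, Tendsto (γ k) l (𝓝 (b k)))
    (hb : Tendsto b l' (𝓝 0)) : Tendsto β l (𝓝 0) := by
  refine tendsto_order.2 ⟨fun a ha => Eventually.of_forall fun i => ha.trans_le (hβ i),
    fun a ha => ?_⟩
  obtain ⟨k, hk⟩ := (hb.eventually (gt_mem_nhds ha)).exists
  filter_upwards [(hγ k).eventually (gt_mem_nhds hk)] with i hi using (hle k i).trans_lt hi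

section Breiman

variable {α : Type*} [MeasurableSpace α] {μ : Measure α} [IsProbabilityMeasure μ] {f : α → α}
  {C : ℝ}

/-- Dominating `Dᵢ` for `i ≥ k` by the tail supremum `hₖ = ⨆_{i ≥ k} Dᵢ` gives
`(1/N) ∑_{i<N} Dᵢ ∘ f^[i] ≤ k C / N + (1/N) ∑_{i<N} hₖ ∘ f^[i]`; by Birkhoff the right side
tends to `∫ hₖ`, which tends to `0` by dominated convergence. -/
theorem ae_tendsto_cesaro_iterate_zero (hf : Ergodic f μ) {D : ℕ → α → ℝ}
    (hDm : ∀ i, Measurable (D i)) (hD0 : ∀ i x, 0 ≤ D i x) (hDC : ∀ i x, D i x ≤ C)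
    (hD : ∀ᵐ x ∂μ, Tendsto (D · x) atTop (𝓝 0)) :
    ∀ᵐ x ∂μ, Tendsto (fun N : ℕ => (N : ℝ)⁻¹ * ∑ i ∈ range N, D i (f^[i] x)) atTop (𝓝 0) := by
  set h : ℕ → α → ℝ := fun k x => ⨆ i, D (k + i) x
  have hbdd : ∀ k x, BddAbove (Set.range fun i => D (k + i) x) := fun k x =>
    ⟨C, Set.forall_mem_range.2 fun i => hDC _ _⟩
  have hh0 : ∀ k x, 0 ≤ h k x := fun k x => Real.iSup_nonneg fun i => hD0 _ _
  have hhC : ∀ k x, |h k x| ≤ C := fun k x => by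
    rw [abs_of_nonneg (hh0 k x)]
    exact ciSup_le fun i => hDC _ _
  have hDh : ∀ k i x, k ≤ i → D i x ≤ h k x := fun k i x hki => by
    simpa [Nat.add_sub_cancel' hki] using le_ciSup (hbdd k x) (i - k)
  have hhm : ∀ k, Measurable (h k) := fun k => Measurable.iSup fun i => hDm (k + i)
  have hint : Tendsto (fun k => ∫ x, h k x ∂μ) atTop (𝓝 0) := by
    simpa using tendsto_integral_of_dominated_convergence (fun _ => C)
      (fun k => (hhm k).aestronglyMeasurable) (integrable_const C)
      (fun k => ae_of_all _ fun x => hhC k x)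
      (hD.mono fun x hx => tendsto_iSup_add_of_tendsto_zero (fun i => hD0 i x) hx)
  filter_upwards [ae_all_iff.2 fun k => ae_tendsto_birkhoffAverage hf (hhm k) (hhC k)] with x hx
  have hC : 0 ≤ C := (hD0 0 x).trans (hDC 0 x)
  refine tendsto_zero_of_forall_le_of_tendsto
    (γ := fun k N => k * C / N + birkhoffAverage ℝ f (h k) N x)
    (fun N => mul_nonneg (by positivity) (sum_nonneg fun i _ => hD0 _ _)) (fun k N => ?_)
    (fun k => by simpa using (tendsto_const_div_atTop_nhds_zero_nat _).add (hx k)) hint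
  calc (N : ℝ)⁻¹ * ∑ i ∈ range N, D i (f^[i] x)
      ≤ (N : ℝ)⁻¹ * (k * C + birkhoffSum f (h k) N x) :=
        mul_le_mul_of_nonneg_left (sum_range_le_mul_add_sum hC (fun i => hDC _ _)
          (fun i hki => hDh k i _ hki) (fun i => hh0 _ _) N) (by positivity)
    _ = k * C / N + birkhoffAverage ℝ f (h k) N x := by
        rw [birkhoffAverage, smul_eq_mul]; ring

theorem ae_tendsto_cesaro_iterate (hf : Ergodic f μ) {F : ℕ → α → ℝ} {G : α → ℝ}
    (hFm : ∀ i, Measurable (F i)) (hGm : Measurable G) (hFC : ∀ i x, |F i x| ≤ C)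
    (hGC : ∀ x, |G x| ≤ C) (hFG : ∀ᵐ x ∂μ, Tendsto (F · x) atTop (𝓝 (G x))) :
    ∀ᵐ x ∂μ, Tendsto (fun N : ℕ => (N : ℝ)⁻¹ * ∑ i ∈ range N, F i (f^[i] x)) atTop
      (𝓝 (∫ x, G x ∂μ)) := by
  have hD := ae_tendsto_cesaro_iterate_zero hf (D := fun i x => |F i x - G x|) (C := 2 * C)
    (fun i => ((hFm i).sub hGm).abs) (fun i x => abs_nonneg _)
    (fun i x => (abs_sub _ _).trans (by linarith [hFC i x, hGC x]))
    (hFG.mono fun x hx => by simpa using (hx.sub_const (G x)).abs)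
  filter_upwards [ae_tendsto_birkhoffAverage hf hGm hGC, hD] with x hGx hDx
  refine hGx.congr_dist (squeeze_zero (fun N => dist_nonneg) (fun N => ?_) hDx)
  rw [birkhoffAverage, birkhoffSum, smul_eq_mul, dist_eq_norm, ← mul_sub, ← sum_sub_distrib,
    norm_mul, norm_inv, RCLike.norm_natCast]
  gcongr
  exact (norm_sum_le _ _).trans_eq (sum_congr rfl fun i _ => by rw [Real.norm_eq_abs, abs_sub_comm])

end Breiman



lemma sum_Icc_one_iterate {α : Type*} (F : ℕ → α → ℝ) (T : α → α) (N : ℕ) (ω : α) :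
    ∑ i ∈ Icc 1 N, F i (T^[i] ω) = ∑ i ∈ range N, F (i + 1) (T^[i] (T ω)) := by
  rw [← Ico_add_one_right_eq_Icc, sum_Ico_eq_sum_range]
  simp [add_comm, Function.iterate_succ_apply]

theorem stmt18_general {Ω X Y Λ : Type*}
    [MeasurableSpace Ω]
    [MetricSpace X] [CompactSpace X] [MeasurableSpace X] [BorelSpace X]
    [MetricSpace Y] [CompactSpace Y] [MeasurableSpace Y]
    [MetricSpace Λ] [CompactSpace Λ]
    (l : Y → Λ → X → ℝ)
    (hl : Continuous fun p : Y × Λ × X => l p.1 p.2.1 p.2.2)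
    (μ : Measure Ω) [IsProbabilityMeasure μ]
    (T : Ω → Ω) (hT : Ergodic T μ)
    -- `P_i`: conditional distributions converging weakly to `P∞` (Lévy's zero-one law)
    (P : ℕ → Ω → ProbabilityMeasure X) (Pinf : Ω → ProbabilityMeasure X)
    (hP : ∀ᵐ ω ∂μ, Tendsto (fun i => P i ω) atTop (𝓝 (Pinf ω)))
    -- expert outputs converging to `y*`
    (yseq : ℕ → Ω → Y) (ystar : Ω → Y)
    (hPm : ∀ i, Measurable fun ω =>
      ⨆ lam : Λ, ∫ x, l (yseq i ω) lam x ∂(P i ω : Measure X))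
    (hPinfm : Measurable fun ω =>
      ⨆ lam : Λ, ∫ x, l (ystar ω) lam x ∂(Pinf ω : Measure X))
    (hy : ∀ᵐ ω ∂μ, Tendsto (fun i => yseq i ω) atTop (𝓝 (ystar ω))) :
    -- joint continuity of `f(Q, y) = max_λ E_Q[l(y, λ, x)]`
    (∀ (Qs : ℕ → ProbabilityMeasure X) (Qinf : ProbabilityMeasure X)
        (ys : ℕ → Y) (yinf : Y),
      Tendsto Qs atTop (𝓝 Qinf) → Tendsto ys atTop (𝓝 yinf) →
      Tendsto (fun i => ⨆ lam : Λ, ∫ x, l (ys i) lam x ∂(Qs i : Measure X))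
        atTop (𝓝 (⨆ lam : Λ, ∫ x, l yinf lam x ∂(Qinf : Measure X)))) ∧
    -- Cesàro convergence of `f(P_i, y^i)` along the shifted process
    (∀ᵐ ω ∂μ, Tendsto (fun N : ℕ => (1 / (N : ℝ)) * ∑ i ∈ Finset.Icc 1 N,
        ⨆ lam : Λ, ∫ x, l (yseq i (T^[i] ω)) lam x ∂(P i (T^[i] ω) : Measure X))
      atTop
      (𝓝 (∫ ω', (⨆ lam : Λ, ∫ x, l (ystar ω') lam x ∂(Pinf ω' : Measure X)) ∂μ))) := by
  have hV := continuous_iSup_integral (X := X) l hl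
  refine ⟨fun Qs Qinf ys yinf hQ hys => (hV.tendsto (Qinf, yinf)).comp (hQ.prodMk_nhds hys), ?_⟩
  obtain ⟨C, hC⟩ := exists_abs_iSup_integral_le (X := X) l hl
  have hconv : ∀ᵐ ω ∂μ, Tendsto (fun i => ⨆ lam : Λ,
      ∫ x, l (yseq (i + 1) ω) lam x ∂(P (i + 1) ω : Measure X)) atTop
      (𝓝 (⨆ lam : Λ, ∫ x, l (ystar ω) lam x ∂(Pinf ω : Measure X))) := by
    filter_upwards [hP, hy] with ω hPω hyω
    exact ((hV.tendsto _).comp (hPω.prodMk_nhds hyω)).comp (tendsto_add_atTop_nat 1)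
  have hB := ae_tendsto_cesaro_iterate hT (fun i => hPm (i + 1)) hPinfm
    (fun i ω => hC _ _) (fun ω => hC _ _) hconv
  filter_upwards [hT.quasiMeasurePreserving.ae hB] with ω hω
  refine hω.congr fun N => ?_
  rw [one_div, sum_Icc_one_iterate
    (fun i ω => ⨆ lam : Λ, ∫ x, l (yseq i ω) lam x ∂(P i ω : Measure X))]

/-- Joint continuity of `f(Q, y) = max_λ E_Q[l(y,λ,x)]` in `(Q, y)` (weak topology on
measures), and the resulting almost-sure convergence of the Cesàro averages
`(1/N) Σ f(P_i, y^i)` (evaluated along the shifted process, as in Breiman's generalized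
ergodic theorem) to `E[f(P∞, y*)]`. -/
theorem stmt18 {Ω X Y Λ : Type*}
    [MeasurableSpace Ω]
    [MetricSpace X] [CompactSpace X] [MeasurableSpace X] [BorelSpace X]
    [MetricSpace Y] [CompactSpace Y] [Nonempty Y] [MeasurableSpace Y] [BorelSpace Y]
    [MetricSpace Λ] [CompactSpace Λ] [Nonempty Λ]
    (l : Y → Λ → X → ℝ)
    (hl : Continuous fun p : Y × Λ × X => l p.1 p.2.1 p.2.2)
    (μ : Measure Ω) [IsProbabilityMeasure μ]
    (T : Ω → Ω) (hT : Ergodic T μ)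
    -- `P_i`: conditional distributions converging weakly to `P∞` (Lévy's zero-one law)
    (P : ℕ → Ω → ProbabilityMeasure X) (Pinf : Ω → ProbabilityMeasure X)
    (hP : ∀ᵐ ω ∂μ, Tendsto (fun i => P i ω) atTop (𝓝 (Pinf ω)))
    -- expert outputs converging to `y*`
    (yseq : ℕ → Ω → Y) (ystar : Ω → Y)
    (hym : ∀ i, Measurable (yseq i)) (hystarm : Measurable ystar)
    (hPm : ∀ i, Measurable fun ω =>
      ⨆ lam : Λ, ∫ x, l (yseq i ω) lam x ∂(P i ω : Measure X))
    (hPinfm : Measurable fun ω =>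
      ⨆ lam : Λ, ∫ x, l (ystar ω) lam x ∂(Pinf ω : Measure X))
    (hy : ∀ᵐ ω ∂μ, Tendsto (fun i => yseq i ω) atTop (𝓝 (ystar ω))) :
    -- joint continuity of `f(Q, y) = max_λ E_Q[l(y, λ, x)]`
    (∀ (Qs : ℕ → ProbabilityMeasure X) (Qinf : ProbabilityMeasure X)
        (ys : ℕ → Y) (yinf : Y),
      Tendsto Qs atTop (𝓝 Qinf) → Tendsto ys atTop (𝓝 yinf) →
      Tendsto (fun i => ⨆ lam : Λ, ∫ x, l (ys i) lam x ∂(Qs i : Measure X))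
        atTop (𝓝 (⨆ lam : Λ, ∫ x, l yinf lam x ∂(Qinf : Measure X)))) ∧
    -- Cesàro convergence of `f(P_i, y^i)` along the shifted process
    (∀ᵐ ω ∂μ, Tendsto (fun N : ℕ => (1 / (N : ℝ)) * ∑ i ∈ Finset.Icc 1 N,
        ⨆ lam : Λ, ∫ x, l (yseq i (T^[i] ω)) lam x ∂(P i (T^[i] ω) : Measure X))
      atTop
      (𝓝 (∫ ω', (⨆ lam : Λ, ∫ x, l (ystar ω') lam x ∂(Pinf ω' : Measure X)) ∂μ))) :=
  stmt18_general l hl μ T hT P Pinf hP yseq ystar hPm hPinfm hy
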